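/- The scalar curvature of the Robinson–Trautman metric ds² = -2(a - 2br - d/r)dt² + 2dt dr - (r²/f²)(dx² + dy²) equals κ = -(2/r²)[f_x² + f_y² - f(f_{xx} + f_{yy}) - 2a + 12br]. -/

import Mathlib

open scoped BigOperators

noncomputable section

/-- Points of the coordinate chart `(t,r,x,y)`. -/
abbrev RTPt := Fin 4 → ℝ

/-- Partial derivative in coordinate direction `i`. -/
def RTpd (i : Fin 4) (F : RTPt → ℝ) (p : RTPt) : ℝ :=
  deriv (fun s => F (Function.update p i s)) (p i)

/-- partial derivative of `f(x,y)` in `x`. -/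
def pX (f : ℝ → ℝ → ℝ) (x y : ℝ) : ℝ := deriv (fun s => f s y) x

/-- partial derivative of `f(x,y)` in `y`. -/
def pY (f : ℝ → ℝ → ℝ) (x y : ℝ) : ℝ := deriv (fun s => f x s) y

/-- The Robinson–Trautman metric components. -/
def RTg (a b d : ℝ) (f : ℝ → ℝ → ℝ) (i j : Fin 4) (p : RTPt) : ℝ :=
  if i = 0 ∧ j = 0 then -2 * (a - 2 * b * p 1 - d / p 1)
  else if (i = 0 ∧ j = 1) ∨ (i = 1 ∧ j = 0) then 1
  else if (i = 2 ∧ j = 2) ∨ (i = 3 ∧ j = 3) then -(p 1)^2 / (f (p 2) (p 3))^2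
  else 0

/-- The inverse Robinson–Trautman metric components. -/
def RTgInv (a b d : ℝ) (f : ℝ → ℝ → ℝ) (i j : Fin 4) (p : RTPt) : ℝ :=
  if i = 1 ∧ j = 1 then 2 * (a - 2 * b * p 1 - d / p 1)
  else if (i = 0 ∧ j = 1) ∨ (i = 1 ∧ j = 0) then 1
  else if (i = 2 ∧ j = 2) ∨ (i = 3 ∧ j = 3) then -(f (p 2) (p 3))^2 / (p 1)^2
  else 0

/-- Christoffel symbols `Γ^k_{ij}` of the Levi-Civita connection of the RT metric. -/
def RTGamma (a b d : ℝ) (f : ℝ → ℝ → ℝ) (k i j : Fin 4) (p : RTPt) : ℝ :=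
  (1/2) * ∑ l : Fin 4, RTgInv a b d f k l p *
    (RTpd i (RTg a b d f l j) p + RTpd j (RTg a b d f l i) p - RTpd l (RTg a b d f i j) p)

/-- `(0,4)` Riemann curvature tensor
`R_{pqrs} = g_{pα}(∂_s Γ^α_{qr} - ∂_r Γ^α_{qs} + Γ^β_{qr}Γ^α_{βs} - Γ^β_{qs}Γ^α_{βr})`. -/
def RTRiem (a b d : ℝ) (f : ℝ → ℝ → ℝ) (i j k l : Fin 4) (p : RTPt) : ℝ :=
  ∑ α : Fin 4, RTg a b d f i α p *
    (RTpd l (RTGamma a b d f α j k) p - RTpd k (RTGamma a b d f α j l) p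
      + ∑ β : Fin 4, (RTGamma a b d f β j k p * RTGamma a b d f α β l p
          - RTGamma a b d f β j l p * RTGamma a b d f α β k p))

/-- Ricci tensor `S_{ij} = R^k_{ikj}` of the RT metric. -/
def RTRic (a b d : ℝ) (f : ℝ → ℝ → ℝ) (i j : Fin 4) (p : RTPt) : ℝ :=
  ∑ k : Fin 4, ∑ l : Fin 4, RTgInv a b d f k l p * RTRiem a b d f l i k j p

/-- Scalar curvature of the RT metric. -/
def RTScal (a b d : ℝ) (f : ℝ → ℝ → ℝ) (p : RTPt) : ℝ :=
  ∑ i : Fin 4, ∑ j : Fin 4, RTgInv a b d f i j p * RTRic a b d f i j p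

/-- Lie derivative of a `(0,2)` tensor field along a vector field `X`. -/
def RTlie2 (X : RTPt → Fin 4 → ℝ) (T : Fin 4 → Fin 4 → RTPt → ℝ) (i j : Fin 4) (p : RTPt) : ℝ :=
  (∑ k : Fin 4, X p k * RTpd k (T i j) p)
  + (∑ k : Fin 4, T k j p * RTpd i (fun q => X q k) p)
  + (∑ k : Fin 4, T i k p * RTpd j (fun q => X q k) p)

/-- Lie derivative of a `(0,4)` tensor field along a vector field `X`. -/
def RTlie4 (X : RTPt → Fin 4 → ℝ) (T : Fin 4 → Fin 4 → Fin 4 → Fin 4 → RTPt → ℝ)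
    (i j k l : Fin 4) (p : RTPt) : ℝ :=
  (∑ m : Fin 4, X p m * RTpd m (T i j k l) p)
  + (∑ m : Fin 4, T m j k l p * RTpd i (fun q => X q m) p)
  + (∑ m : Fin 4, T i m k l p * RTpd j (fun q => X q m) p)
  + (∑ m : Fin 4, T i j m l p * RTpd k (fun q => X q m) p)
  + (∑ m : Fin 4, T i j k m p * RTpd l (fun q => X q m) p)

/-- Kulkarni–Nomizu product of two `(0,2)` tensor fields. -/
def RTKN (A B : Fin 4 → Fin 4 → RTPt → ℝ) (i j k l : Fin 4) (p : RTPt) : ℝ :=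
  A i l p * B j k p - A i k p * B j l p + A j k p * B i l p - A j l p * B i k p

/-- `F₁ = f_x² + f_y² - f(f_{xx} + f_{yy})`. -/
def F1 (f : ℝ → ℝ → ℝ) (x y : ℝ) : ℝ :=
  (pX f x y)^2 + (pY f x y)^2 - f x y * (pX (pX f) x y + pY (pY f) x y)

/-- `F₁ᵐ = f_x² + f_y² - f(f_{xx} - f_{yy})`. -/
def F1m (f : ℝ → ℝ → ℝ) (x y : ℝ) : ℝ :=
  (pX f x y)^2 + (pY f x y)^2 - f x y * (pX (pX f) x y - pY (pY f) x y)

/-- `F₁₁` from the paper. -/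
def F11 (a b : ℝ) (f : ℝ → ℝ → ℝ) (r x y : ℝ) : ℝ :=
  -2*(pX f x y)^3
  + pX f x y * (4*a - 16*b*r - 2*(pY f x y)^2 + f x y * (pY (pY f) x y + 3*pX (pX f) x y))
  - f x y * (-2*pY f x y * pY (pX f) x y + f x y * (pX (pX (pX f)) x y + pY (pY (pX f)) x y))

/-- `F₁₃` from the paper. -/
def F13 (a b : ℝ) (f : ℝ → ℝ → ℝ) (r x y : ℝ) : ℝ :=
  -2*(pY f x y)^3
  + pY f x y * (4*a - 16*b*r - 2*(pX f x y)^2 + f x y * (3*pY (pY f) x y + pX (pX f) x y))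
  - f x y * (-2*pX f x y * pY (pX f) x y + f x y * (pY (pY (pY f)) x y + pY (pX (pX f)) x y))

section Aux

section Calc
open Function

lemma hasDerivAt_pX {f : ℝ → ℝ → ℝ} (hf : ContDiff ℝ (⊤ : ℕ∞) (uncurry f)) (x y : ℝ) :
    HasDerivAt (fun s => f s y) (pX f x y) x := by
  have h := ((hf.differentiable (by simp) (x, y)).hasFDerivAt).comp_hasDerivAt x
    ((hasDerivAt_id x).prodMk (hasDerivAt_const x y))
  have : pX f x y = fderiv ℝ (uncurry f) (x, y) (1, 0) := h.deriv
  rwa [this]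

lemma hasDerivAt_pY {f : ℝ → ℝ → ℝ} (hf : ContDiff ℝ (⊤ : ℕ∞) (uncurry f)) (x y : ℝ) :
    HasDerivAt (fun s => f x s) (pY f x y) y := by
  have h := ((hf.differentiable (by simp) (x, y)).hasFDerivAt).comp_hasDerivAt y
    ((hasDerivAt_const y x).prodMk (hasDerivAt_id y))
  have : pY f x y = fderiv ℝ (uncurry f) (x, y) (0, 1) := h.deriv
  rwa [this]

lemma contDiff_pX {f : ℝ → ℝ → ℝ} (hf : ContDiff ℝ (⊤ : ℕ∞) (uncurry f)) :
    ContDiff ℝ (⊤ : ℕ∞) (uncurry (pX f)) := by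
  have : uncurry (pX f) = fun q : ℝ × ℝ => fderiv ℝ (uncurry f) q ((1 : ℝ), (0 : ℝ)) := by
    funext q
    exact (((hf.differentiable (by simp) q).hasFDerivAt).comp_hasDerivAt q.1
      ((hasDerivAt_id q.1).prodMk (hasDerivAt_const q.1 q.2))).deriv
  rw [this]
  exact (hf.fderiv_right (by simp)).clm_apply contDiff_const

lemma contDiff_pY {f : ℝ → ℝ → ℝ} (hf : ContDiff ℝ (⊤ : ℕ∞) (uncurry f)) :
    ContDiff ℝ (⊤ : ℕ∞) (uncurry (pY f)) := by
  have : uncurry (pY f) = fun q : ℝ × ℝ => fderiv ℝ (uncurry f) q ((0 : ℝ), (1 : ℝ)) := by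
    funext q
    exact (((hf.differentiable (by simp) q).hasFDerivAt).comp_hasDerivAt q.2
      ((hasDerivAt_const q.2 q.1).prodMk (hasDerivAt_id q.2))).deriv
  rw [this]
  exact (hf.fderiv_right (by simp)).clm_apply contDiff_const

lemma hasDerivAt_h (a b d r : ℝ) (hr : r ≠ 0) :
    HasDerivAt (fun s : ℝ => a - 2 * b * s - d / s) (-(2*b) + d/r^2) r := by
  have h1 : HasDerivAt (fun s : ℝ => d / s) (-(d / r ^ 2)) r := by
    have := (hasDerivAt_const r d).div (hasDerivAt_id r) hr
    refine this.congr_deriv ?_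
    simp only [id]
    ring
  have h2 : HasDerivAt (fun s : ℝ => a - 2 * b * s) (-(2*b)) r := by
    simpa using ((hasDerivAt_id r).const_mul (2*b)).const_sub a
  have := h2.sub h1
  refine this.congr_deriv ?_
  ring

lemma hasDerivAt_hp (b d r : ℝ) (hr : r ≠ 0) :
    HasDerivAt (fun s : ℝ => -2*b + d/s^2) (-2*d/r^3) r := by
  have h1 : HasDerivAt (fun s : ℝ => s^2) (2*r) r := by
    simpa using (hasDerivAt_pow 2 r)
  have h2 := (hasDerivAt_const r d).div h1 (pow_ne_zero 2 hr)
  have h3 := h2.const_add (-2*b)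
  refine h3.congr_deriv ?_
  field_simp
  ring

lemma L_g00 (a b d r : ℝ) (hr : r ≠ 0) :
    deriv (fun s : ℝ => -2 * (a - 2 * b * s - d / s)) r = 4*b - 2*d/r^2 := by
  rw [((hasDerivAt_h a b d r hr).const_mul (-2)).deriv]; ring

lemma L_hp (b d r : ℝ) (hr : r ≠ 0) :
    deriv (fun s : ℝ => -2*b + d/s^2) r = -2*d/r^3 :=
  (hasDerivAt_hp b d r hr).deriv

lemma L_hm (b d r : ℝ) (hr : r ≠ 0) :
    deriv (fun s : ℝ => 2*b - d/s^2) r = 2*d/r^3 := by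
  have h1 : HasDerivAt (fun s : ℝ => s^2) (2*r) r := by simpa using (hasDerivAt_pow 2 r)
  have h2 := (hasDerivAt_const r d).div h1 (pow_ne_zero 2 hr)
  have h3 := h2.const_sub (2*b)
  refine h3.deriv.trans ?_
  field_simp
  ring

lemma L_sq_div (c r : ℝ) : deriv (fun s : ℝ => s ^ 2 / c) r = 2*r/c := by
  have h1 : HasDerivAt (fun s : ℝ => s^2/c) (2*r/c) r := by
    have : HasDerivAt (fun s : ℝ => s^2) (2*r) r := by simpa using (hasDerivAt_pow 2 r)
    exact this.div_const c
  exact h1.deriv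

lemma L_id_div (c r : ℝ) : deriv (fun s : ℝ => s / c) r = 1/c := by
  have h1 : HasDerivAt (fun s : ℝ => s/c) (1/c) r := by
    simpa [one_div, div_eq_mul_inv] using (hasDerivAt_id r).div_const c
  exact h1.deriv

lemma L_inv (r : ℝ) (hr : r ≠ 0) : deriv (fun s : ℝ => 1 / s) r = -(1/r^2) := by
  have h := (hasDerivAt_const r 1).div (hasDerivAt_id' r) hr
  refine h.deriv.trans ?_
  field_simp
  ring

lemma L_hh (a b d r : ℝ) (hr : r ≠ 0) :
    deriv (fun s : ℝ => 2*(a - 2*b*s - d/s)*(-2*b + d/s^2)) r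
      = 2*(-2*b + d/r^2)^2 + 2*(a - 2*b*r - d/r)*(-2*d/r^3) := by
  have h1 := ((hasDerivAt_h a b d r hr).const_mul 2).mul (hasDerivAt_hp b d r hr)
  refine h1.deriv.trans ?_
  try ring

lemma L_hr_div (a b d c r : ℝ) (hr : r ≠ 0) :
    deriv (fun s : ℝ => 2*(a - 2*b*s - d/s)*s/c) r
      = (2*(-(2*b) + d/r^2)*r + 2*(a - 2*b*r - d/r))/c := by
  have h1 := (((hasDerivAt_h a b d r hr).const_mul 2).mul (hasDerivAt_id' r)).div_const c
  refine h1.deriv.trans ?_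
  try ring

lemma L_cdivf2x {f : ℝ → ℝ → ℝ} (hf : ContDiff ℝ (⊤ : ℕ∞) (uncurry f)) (c x y : ℝ)
    (hF : f x y ≠ 0) :
    deriv (fun s => c / f s y ^ 2) x = -(2*c*pX f x y)/f x y^3 := by
  have h1 := (hasDerivAt_pX hf x y).pow 2
  have h2 := (hasDerivAt_const x c).div h1 (pow_ne_zero 2 hF)
  refine h2.deriv.trans ?_
  simp only [Pi.pow_apply]
  field_simp
  ring

lemma L_cdivf2y {f : ℝ → ℝ → ℝ} (hf : ContDiff ℝ (⊤ : ℕ∞) (uncurry f)) (c x y : ℝ)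
    (hF : f x y ≠ 0) :
    deriv (fun s => c / f x s ^ 2) y = -(2*c*pY f x y)/f x y^3 := by
  have h1 := (hasDerivAt_pY hf x y).pow 2
  have h2 := (hasDerivAt_const y c).div h1 (pow_ne_zero 2 hF)
  refine h2.deriv.trans ?_
  simp only [Pi.pow_apply]
  field_simp
  ring

lemma L_pXdivX {f : ℝ → ℝ → ℝ} (hf : ContDiff ℝ (⊤ : ℕ∞) (uncurry f)) (x y : ℝ)
    (hF : f x y ≠ 0) :
    deriv (fun s => pX f s y / f s y) x
      = (pX (pX f) x y * f x y - pX f x y ^ 2) / f x y ^ 2 := by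
  have h1 := (hasDerivAt_pX (contDiff_pX hf) x y).div (hasDerivAt_pX hf x y) hF
  refine h1.deriv.trans ?_
  try ring

lemma L_pXdivY {f : ℝ → ℝ → ℝ} (hf : ContDiff ℝ (⊤ : ℕ∞) (uncurry f)) (x y : ℝ)
    (hF : f x y ≠ 0) :
    deriv (fun s => pX f x s / f x s) y
      = (pY (pX f) x y * f x y - pX f x y * pY f x y) / f x y ^ 2 := by
  have h1 := (hasDerivAt_pY (contDiff_pX hf) x y).div (hasDerivAt_pY hf x y) hF
  refine h1.deriv.trans ?_
  try ring

lemma L_pYdivX {f : ℝ → ℝ → ℝ} (hf : ContDiff ℝ (⊤ : ℕ∞) (uncurry f)) (x y : ℝ)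
    (hF : f x y ≠ 0) :
    deriv (fun s => pY f s y / f s y) x
      = (pX (pY f) x y * f x y - pY f x y * pX f x y) / f x y ^ 2 := by
  have h1 := (hasDerivAt_pX (contDiff_pY hf) x y).div (hasDerivAt_pX hf x y) hF
  refine h1.deriv.trans ?_
  try ring

lemma L_pYdivY {f : ℝ → ℝ → ℝ} (hf : ContDiff ℝ (⊤ : ℕ∞) (uncurry f)) (x y : ℝ)
    (hF : f x y ≠ 0) :
    deriv (fun s => pY f x s / f x s) y
      = (pY (pY f) x y * f x y - pY f x y ^ 2) / f x y ^ 2 := by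
  have h1 := (hasDerivAt_pY (contDiff_pY hf) x y).div (hasDerivAt_pY hf x y) hF
  refine h1.deriv.trans ?_
  try ring

end Calc

/-- Closed-form table of the Christoffel symbols. -/
def Gam (a b d : ℝ) (f : ℝ → ℝ → ℝ) (k i j : Fin 4) (p : RTPt) : ℝ :=
  if k = 0 then
    if i = 0 ∧ j = 0 then -2*b + d/(p 1)^2
    else if (i = 2 ∧ j = 2) ∨ (i = 3 ∧ j = 3) then p 1/f (p 2) (p 3)^2
    else 0
  else if k = 1 then
    if i = 0 ∧ j = 0 then 2*(a - 2*b*p 1 - d/p 1)*(-2*b + d/(p 1)^2)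
    else if (i = 0 ∧ j = 1) ∨ (i = 1 ∧ j = 0) then 2*b - d/(p 1)^2
    else if (i = 2 ∧ j = 2) ∨ (i = 3 ∧ j = 3) then 2*(a - 2*b*p 1 - d/p 1)*p 1/f (p 2) (p 3)^2
    else 0
  else if k = 2 then
    if (i = 1 ∧ j = 2) ∨ (i = 2 ∧ j = 1) then 1/p 1
    else if i = 2 ∧ j = 2 then -pX f (p 2) (p 3)/f (p 2) (p 3)
    else if (i = 2 ∧ j = 3) ∨ (i = 3 ∧ j = 2) then -pY f (p 2) (p 3)/f (p 2) (p 3)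
    else if i = 3 ∧ j = 3 then pX f (p 2) (p 3)/f (p 2) (p 3)
    else 0
  else
    if (i = 1 ∧ j = 3) ∨ (i = 3 ∧ j = 1) then 1/p 1
    else if i = 2 ∧ j = 2 then pY f (p 2) (p 3)/f (p 2) (p 3)
    else if (i = 2 ∧ j = 3) ∨ (i = 3 ∧ j = 2) then -pX f (p 2) (p 3)/f (p 2) (p 3)
    else if i = 3 ∧ j = 3 then -pY f (p 2) (p 3)/f (p 2) (p 3)
    else 0

set_option linter.unnecessarySeqFocus false

lemma fin4cases (i : Fin 4) : i = 0 ∨ i = 1 ∨ i = 2 ∨ i = 3 := by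
  revert i; decide

section GammaTable
variable {a b d : ℝ} {f : ℝ → ℝ → ℝ}

set_option maxHeartbeats 2000000 in
lemma Gamma_eq_0 (hf : ContDiff ℝ (⊤ : ℕ∞) (Function.uncurry f))
    (hf0 : ∀ x y, f x y ≠ 0) (i j : Fin 4) :
    ∀ q : RTPt, q 1 ≠ 0 → RTGamma a b d f 0 i j q = Gam a b d f 0 i j q := by
  intro q hq
  have hF := hf0 (q 2) (q 3)
  rcases fin4cases i with rfl | rfl | rfl | rfl <;> rcases fin4cases j with rfl | rfl | rfl | rfl <;>
    (simp (config := { decide := true }) only [RTGamma, Fin.sum_univ_four, RTpd, RTg, RTgInv,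
      Gam, Function.update_apply, if_true, if_false, reduceIte, deriv_const]
     <;>
     (try simp only [neg_div, deriv.fun_neg, L_g00 a b d (q 1) hq, L_sq_div,
        L_cdivf2x hf _ (q 2) (q 3) hF, L_cdivf2y hf _ (q 2) (q 3) hF, deriv_const])
     <;> (try field_simp) <;> (try ring))

set_option maxHeartbeats 2000000 in
lemma Gamma_eq_1 (hf : ContDiff ℝ (⊤ : ℕ∞) (Function.uncurry f))
    (hf0 : ∀ x y, f x y ≠ 0) (i j : Fin 4) :
    ∀ q : RTPt, q 1 ≠ 0 → RTGamma a b d f 1 i j q = Gam a b d f 1 i j q := by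
  intro q hq
  have hF := hf0 (q 2) (q 3)
  rcases fin4cases i with rfl | rfl | rfl | rfl <;> rcases fin4cases j with rfl | rfl | rfl | rfl <;>
    (simp (config := { decide := true }) only [RTGamma, Fin.sum_univ_four, RTpd, RTg, RTgInv,
      Gam, Function.update_apply, if_true, if_false, reduceIte, deriv_const]
     <;>
     (try simp only [neg_div, deriv.fun_neg, L_g00 a b d (q 1) hq, L_sq_div,
        L_cdivf2x hf _ (q 2) (q 3) hF, L_cdivf2y hf _ (q 2) (q 3) hF, deriv_const])
     <;> (try field_simp) <;> (try ring))

set_option maxHeartbeats 2000000 in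
lemma Gamma_eq_2 (hf : ContDiff ℝ (⊤ : ℕ∞) (Function.uncurry f))
    (hf0 : ∀ x y, f x y ≠ 0) (i j : Fin 4) :
    ∀ q : RTPt, q 1 ≠ 0 → RTGamma a b d f 2 i j q = Gam a b d f 2 i j q := by
  intro q hq
  have hF := hf0 (q 2) (q 3)
  rcases fin4cases i with rfl | rfl | rfl | rfl <;> rcases fin4cases j with rfl | rfl | rfl | rfl <;>
    (simp (config := { decide := true }) only [RTGamma, Fin.sum_univ_four, RTpd, RTg, RTgInv,
      Gam, Function.update_apply, if_true, if_false, reduceIte, deriv_const]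
     <;>
     (try simp only [neg_div, deriv.fun_neg, L_g00 a b d (q 1) hq, L_sq_div,
        L_cdivf2x hf _ (q 2) (q 3) hF, L_cdivf2y hf _ (q 2) (q 3) hF, deriv_const])
     <;> (try field_simp) <;> (try ring))

set_option maxHeartbeats 2000000 in
lemma Gamma_eq_3 (hf : ContDiff ℝ (⊤ : ℕ∞) (Function.uncurry f))
    (hf0 : ∀ x y, f x y ≠ 0) (i j : Fin 4) :
    ∀ q : RTPt, q 1 ≠ 0 → RTGamma a b d f 3 i j q = Gam a b d f 3 i j q := by
  intro q hq
  have hF := hf0 (q 2) (q 3)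
  rcases fin4cases i with rfl | rfl | rfl | rfl <;> rcases fin4cases j with rfl | rfl | rfl | rfl <;>
    (simp (config := { decide := true }) only [RTGamma, Fin.sum_univ_four, RTpd, RTg, RTgInv,
      Gam, Function.update_apply, if_true, if_false, reduceIte, deriv_const]
     <;>
     (try simp only [neg_div, deriv.fun_neg, L_g00 a b d (q 1) hq, L_sq_div,
        L_cdivf2x hf _ (q 2) (q 3) hF, L_cdivf2y hf _ (q 2) (q 3) hF, deriv_const])
     <;> (try field_simp) <;> (try ring))

lemma Gamma_eq (hf : ContDiff ℝ (⊤ : ℕ∞) (Function.uncurry f))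
    (hf0 : ∀ x y, f x y ≠ 0) (k i j : Fin 4) :
    ∀ q : RTPt, q 1 ≠ 0 → RTGamma a b d f k i j q = Gam a b d f k i j q := by
  rcases fin4cases k with rfl | rfl | rfl | rfl
  · exact Gamma_eq_0 hf hf0 i j
  · exact Gamma_eq_1 hf hf0 i j
  · exact Gamma_eq_2 hf hf0 i j
  · exact Gamma_eq_3 hf hf0 i j

end GammaTable

lemma RTpd_congr (F G : RTPt → ℝ) (h : ∀ q : RTPt, q 1 ≠ 0 → F q = G q)
    (p : RTPt) (hp : p 1 ≠ 0) (l : Fin 4) : RTpd l F p = RTpd l G p := by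
  unfold RTpd
  by_cases hl : l = 1
  · subst hl
    apply Filter.EventuallyEq.deriv_eq
    filter_upwards [eventually_ne_nhds hp] with s hs
    exact h _ (by simpa using hs)
  · have hne : (1 : Fin 4) ≠ l := fun hh => hl hh.symm
    have : (fun s => F (Function.update p l s)) = fun s => G (Function.update p l s) := by
      funext s
      exact h _ (by rwa [Function.update_of_ne hne])
    rw [this]

section Ricci
variable {a b d : ℝ} {f : ℝ → ℝ → ℝ}

set_option maxHeartbeats 2000000 in
lemma Ric01 (hf : ContDiff ℝ (⊤ : ℕ∞) (Function.uncurry f)) (hf0 : ∀ x y, f x y ≠ 0)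
    (p : RTPt) (hp : p 1 ≠ 0) :
    RTRic a b d f 0 1 p = -4*b/p 1 := by
  have hF := hf0 (p 2) (p 3)
  have hG : ∀ k i j, RTGamma a b d f k i j p = Gam a b d f k i j p :=
    fun k i j => Gamma_eq hf hf0 k i j p hp
  have hpd : ∀ l k i j, RTpd l (RTGamma a b d f k i j) p = RTpd l (Gam a b d f k i j) p :=
    fun l k i j => RTpd_congr _ _ (Gamma_eq hf hf0 k i j) p hp l
  simp only [RTRic, RTRiem, Fin.sum_univ_four, hpd, hG]
  simp (config := { decide := true }) only [RTg, RTgInv, Gam, RTpd,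
    Function.update_apply, if_true, if_false, reduceIte, deriv_const]
  simp only [neg_div, deriv.neg, deriv_const,
    L_hp b d (p 1) hp, L_hm b d (p 1) hp, L_hh a b d (p 1) hp,
    L_id_div, L_inv (p 1) hp, L_hr_div a b d _ (p 1) hp,
    L_cdivf2x hf _ (p 2) (p 3) hF, L_cdivf2y hf _ (p 2) (p 3) hF,
    L_pXdivX hf (p 2) (p 3) hF, L_pXdivY hf (p 2) (p 3) hF,
    L_pYdivX hf (p 2) (p 3) hF, L_pYdivY hf (p 2) (p 3) hF]
  field_simp
  ring

set_option maxHeartbeats 2000000 in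
lemma Ric10 (hf : ContDiff ℝ (⊤ : ℕ∞) (Function.uncurry f)) (hf0 : ∀ x y, f x y ≠ 0)
    (p : RTPt) (hp : p 1 ≠ 0) :
    RTRic a b d f 1 0 p = -4*b/p 1 := by
  have hF := hf0 (p 2) (p 3)
  have hG : ∀ k i j, RTGamma a b d f k i j p = Gam a b d f k i j p :=
    fun k i j => Gamma_eq hf hf0 k i j p hp
  have hpd : ∀ l k i j, RTpd l (RTGamma a b d f k i j) p = RTpd l (Gam a b d f k i j) p :=
    fun l k i j => RTpd_congr _ _ (Gamma_eq hf hf0 k i j) p hp l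
  simp only [RTRic, RTRiem, Fin.sum_univ_four, hpd, hG]
  simp (config := { decide := true }) only [RTg, RTgInv, Gam, RTpd,
    Function.update_apply, if_true, if_false, reduceIte, deriv_const]
  simp only [neg_div, deriv.neg, deriv_const,
    L_hp b d (p 1) hp, L_hm b d (p 1) hp, L_hh a b d (p 1) hp,
    L_id_div, L_inv (p 1) hp, L_hr_div a b d _ (p 1) hp,
    L_cdivf2x hf _ (p 2) (p 3) hF, L_cdivf2y hf _ (p 2) (p 3) hF,
    L_pXdivX hf (p 2) (p 3) hF, L_pXdivY hf (p 2) (p 3) hF,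
    L_pYdivX hf (p 2) (p 3) hF, L_pYdivY hf (p 2) (p 3) hF]
  field_simp
  ring

set_option maxHeartbeats 2000000 in
lemma Ric11 (hf : ContDiff ℝ (⊤ : ℕ∞) (Function.uncurry f)) (hf0 : ∀ x y, f x y ≠ 0)
    (p : RTPt) (hp : p 1 ≠ 0) :
    RTRic a b d f 1 1 p = 0 := by
  have hF := hf0 (p 2) (p 3)
  have hG : ∀ k i j, RTGamma a b d f k i j p = Gam a b d f k i j p :=
    fun k i j => Gamma_eq hf hf0 k i j p hp
  have hpd : ∀ l k i j, RTpd l (RTGamma a b d f k i j) p = RTpd l (Gam a b d f k i j) p :=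
    fun l k i j => RTpd_congr _ _ (Gamma_eq hf hf0 k i j) p hp l
  simp only [RTRic, RTRiem, Fin.sum_univ_four, hpd, hG]
  simp (config := { decide := true }) only [RTg, RTgInv, Gam, RTpd,
    Function.update_apply, if_true, if_false, reduceIte, deriv_const]
  simp only [neg_div, deriv.neg, deriv_const,
    L_hp b d (p 1) hp, L_hm b d (p 1) hp, L_hh a b d (p 1) hp,
    L_id_div, L_inv (p 1) hp, L_hr_div a b d _ (p 1) hp,
    L_cdivf2x hf _ (p 2) (p 3) hF, L_cdivf2y hf _ (p 2) (p 3) hF,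
    L_pXdivX hf (p 2) (p 3) hF, L_pXdivY hf (p 2) (p 3) hF,
    L_pYdivX hf (p 2) (p 3) hF, L_pYdivY hf (p 2) (p 3) hF]
  field_simp
  ring

set_option maxHeartbeats 2000000 in
lemma Ric22 (hf : ContDiff ℝ (⊤ : ℕ∞) (Function.uncurry f)) (hf0 : ∀ x y, f x y ≠ 0)
    (p : RTPt) (hp : p 1 ≠ 0) :
    RTRic a b d f 2 2 p = -(pX (pX f) (p 2) (p 3) * f (p 2) (p 3) - pX f (p 2) (p 3)^2)/f (p 2) (p 3)^2
      - (pY (pY f) (p 2) (p 3) * f (p 2) (p 3) - pY f (p 2) (p 3)^2)/f (p 2) (p 3)^2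
      - 2*((-2*b + d/(p 1)^2)*p 1 + (a - 2*b*p 1 - d/p 1))/f (p 2) (p 3)^2 := by
  have hF := hf0 (p 2) (p 3)
  have hG : ∀ k i j, RTGamma a b d f k i j p = Gam a b d f k i j p :=
    fun k i j => Gamma_eq hf hf0 k i j p hp
  have hpd : ∀ l k i j, RTpd l (RTGamma a b d f k i j) p = RTpd l (Gam a b d f k i j) p :=
    fun l k i j => RTpd_congr _ _ (Gamma_eq hf hf0 k i j) p hp l
  simp only [RTRic, RTRiem, Fin.sum_univ_four, hpd, hG]
  simp (config := { decide := true }) only [RTg, RTgInv, Gam, RTpd,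
    Function.update_apply, if_true, if_false, reduceIte, deriv_const]
  simp only [neg_div, deriv.fun_neg, deriv_const,
    L_hp b d (p 1) hp, L_hm b d (p 1) hp, L_hh a b d (p 1) hp,
    L_id_div, L_inv (p 1) hp, L_hr_div a b d _ (p 1) hp,
    L_cdivf2x hf _ (p 2) (p 3) hF, L_cdivf2y hf _ (p 2) (p 3) hF,
    L_pXdivX hf (p 2) (p 3) hF, L_pXdivY hf (p 2) (p 3) hF,
    L_pYdivX hf (p 2) (p 3) hF, L_pYdivY hf (p 2) (p 3) hF]
  field_simp
  ring

set_option maxHeartbeats 2000000 in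
lemma Ric33 (hf : ContDiff ℝ (⊤ : ℕ∞) (Function.uncurry f)) (hf0 : ∀ x y, f x y ≠ 0)
    (p : RTPt) (hp : p 1 ≠ 0) :
    RTRic a b d f 3 3 p = -(pX (pX f) (p 2) (p 3) * f (p 2) (p 3) - pX f (p 2) (p 3)^2)/f (p 2) (p 3)^2
      - (pY (pY f) (p 2) (p 3) * f (p 2) (p 3) - pY f (p 2) (p 3)^2)/f (p 2) (p 3)^2
      - 2*((-2*b + d/(p 1)^2)*p 1 + (a - 2*b*p 1 - d/p 1))/f (p 2) (p 3)^2 := by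
  have hF := hf0 (p 2) (p 3)
  have hG : ∀ k i j, RTGamma a b d f k i j p = Gam a b d f k i j p :=
    fun k i j => Gamma_eq hf hf0 k i j p hp
  have hpd : ∀ l k i j, RTpd l (RTGamma a b d f k i j) p = RTpd l (Gam a b d f k i j) p :=
    fun l k i j => RTpd_congr _ _ (Gamma_eq hf hf0 k i j) p hp l
  simp only [RTRic, RTRiem, Fin.sum_univ_four, hpd, hG]
  simp (config := { decide := true }) only [RTg, RTgInv, Gam, RTpd,
    Function.update_apply, if_true, if_false, reduceIte, deriv_const]
  simp only [neg_div, deriv.fun_neg, deriv_const,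
    L_hp b d (p 1) hp, L_hm b d (p 1) hp, L_hh a b d (p 1) hp,
    L_id_div, L_inv (p 1) hp, L_hr_div a b d _ (p 1) hp,
    L_cdivf2x hf _ (p 2) (p 3) hF, L_cdivf2y hf _ (p 2) (p 3) hF,
    L_pXdivX hf (p 2) (p 3) hF, L_pXdivY hf (p 2) (p 3) hF,
    L_pYdivX hf (p 2) (p 3) hF, L_pYdivY hf (p 2) (p 3) hF]
  field_simp
  ring


end Ricci


end Aux

/-- the scalar curvature of the Robinson–Trautman metric equals
`κ = -(2/r²)[f_x² + f_y² - f(f_{xx} + f_{yy}) - 2a + 12br]`. -/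
theorem RT_scalar_curvature (a b d : ℝ) (f : ℝ → ℝ → ℝ)
    (hf : ContDiff ℝ (⊤ : ℕ∞) (Function.uncurry f)) (hf0 : ∀ x y, f x y ≠ 0) :
    ∀ p : RTPt, p 1 ≠ 0 →
      RTScal a b d f p =
        -(2/(p 1)^2) * ((pX f (p 2) (p 3))^2 + (pY f (p 2) (p 3))^2
          - f (p 2) (p 3) * (pX (pX f) (p 2) (p 3) + pY (pY f) (p 2) (p 3))
          - 2*a + 12*b*p 1) := by
  intro p hp
  have hF := hf0 (p 2) (p 3)
  simp (config := { decide := true }) only [RTScal, Fin.sum_univ_four, RTgInv,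
    if_true, if_false, reduceIte, zero_mul, mul_zero, add_zero, zero_add,
    Ric01 hf hf0 p hp, Ric10 hf hf0 p hp, Ric11 hf hf0 p hp,
    Ric22 hf hf0 p hp, Ric33 hf hf0 p hp]
  field_simp
  ring
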